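/- First James–Hopf identity: let G be an abelian bi-Δ-group and 1 ≤ k ≤ n. For every x ∈ 𝔥_k G, p_n(H_{k,n}(x)) = H_{k,n−1}(x) + H_{k−1,n−1}(p_k(x)), i.e., d_0(H_{k,n}(x)) = H_{k,n−1}(x) + H_{k−1,n−1}(d_0 x), with the convention H_{k,n−1} = 0 when k > n−1. -/

import Mathlib

universe u

section

variable (G : ℕ → Type u) [∀ n, AddCommGroup (G n)]
variable (d : ∀ n : ℕ, ℕ → (G (n + 1) →+ G n))
variable (δ : ∀ n : ℕ, ℕ → (G n →+ G (n + 1)))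

/-- The axioms of an (abelian, additively written) bi-Δ-group: a sequence of groups `G n`
with faces `d n j : G (n+1) →+ G n` (for `j ≤ n+1`) and cofaces
`δ n i : G n →+ G (n+1)` (for `i ≤ n+1`), satisfying the simplicial-type identities. -/
structure IsBiDelta : Prop where
  face_face : ∀ n i j : ℕ, i ≤ j → j ≤ n + 1 → ∀ x : G (n + 2),
    d n i (d (n + 1) (j + 1) x) = d n j (d (n + 1) i x)
  coface_coface : ∀ n i j : ℕ, j ≤ i → i ≤ n + 1 → ∀ x : G n,
    δ (n + 1) j (δ n i x) = δ (n + 1) (i + 1) (δ n j x)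
  face_coface_lt : ∀ n i j : ℕ, j ≤ i → i ≤ n + 1 → ∀ x : G (n + 1),
    d (n + 1) j (δ (n + 1) (i + 1) x) = δ n i (d n j x)
  face_coface_eq : ∀ n i : ℕ, i ≤ n + 1 → ∀ x : G n, d n i (δ n i x) = x
  face_coface_gt : ∀ n i j : ℕ, i ≤ j → j ≤ n + 1 → ∀ x : G (n + 1),
    d (n + 1) (j + 1) (δ (n + 1) i x) = δ n i (d n j x)

/-- The `n`-th Cohen group `𝔥_n G = {x ∈ G_n : d_0 x = d_1 x = ⋯ = d_n x}`
(with `𝔥_0 G = G_0`), as a subgroup of `G n`. -/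
def cohenAll : ∀ n : ℕ, AddSubgroup (G n)
  | 0 => ⊤
  | m + 1 =>
    { carrier := { x : G (m + 1) | ∀ j, j ≤ m + 1 → d m j x = d m 0 x }
      add_mem' := fun {a b} ha hb j hj => by
        simp only [Set.mem_setOf_eq] at ha hb ⊢
        rw [map_add, map_add, ha j hj, hb j hj]
      zero_mem' := fun j hj => by simp
      neg_mem' := fun {a} ha j hj => by
        simp only [Set.mem_setOf_eq] at ha ⊢
        rw [map_neg, map_neg, ha j hj] }

/-- The `n`-th Moore cycle group `Z_n G = ⋂_{j=0}^n ker d_j` (with `Z_0 G = G_0`),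
as a subgroup of `G n`. -/
def mooreAll : ∀ n : ℕ, AddSubgroup (G n)
  | 0 => ⊤
  | m + 1 =>
    { carrier := { x : G (m + 1) | ∀ j, j ≤ m + 1 → d m j x = 0 }
      add_mem' := fun {a b} ha hb j hj => by
        simp only [Set.mem_setOf_eq] at ha hb ⊢
        rw [map_add, ha j hj, hb j hj, add_zero]
      zero_mem' := fun j hj => by simp
      neg_mem' := fun {a} ha j hj => by
        simp only [Set.mem_setOf_eq] at ha ⊢
        rw [map_neg, ha j hj, neg_zero] }

/-- Iterated cofaces `d^{c(r-1)} d^{c(r-2)} ⋯ d^{c(0)}(x)` along a tuple `c` of coface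
indices (`c 0` is applied first, at level `k`). -/
def iterCoface (k : ℕ) : ∀ r : ℕ, (Fin r → ℕ) → G k → G (k + r)
  | 0, _, x => x
  | r + 1, c, x => δ (k + r) (c (Fin.last r)) (iterCoface k r (fun i => c i.castSucc) x)

open Classical in
/-- The James–Hopf homomorphism `H_{k,n} : G_k → G_n` (`n = k + r`): the sum, over all
strictly increasing tuples `0 ≤ i_1 < i_2 < ⋯ < i_{n-k} ≤ n`, of
`d^{i_{n-k}} d^{i_{n-k-1}} ⋯ d^{i_1}(x)`. -/
noncomputable def jamesHopf (k r : ℕ) (x : G k) : G (k + r) :=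
  ∑ c ∈ Finset.univ.filter (fun c : Fin r → Fin (k + r + 1) => StrictMono c),
    iterCoface G δ k r (fun i => (c i : ℕ)) x

/-- `σ_{m+1} = H_{m,m+1} = Σ_{i=0}^{m+1} d^i : G m →+ G (m+1)` (as a function). -/
def sigmaMap (m : ℕ) (x : G m) : G (m + 1) :=
  ∑ i ∈ Finset.range (m + 2), δ m i x

/-- The composite `σ_{s+r} ∘ σ_{s+r-1} ∘ ⋯ ∘ σ_{s+1} : G s → G (s+r)`. -/
def sigmaIter (s : ℕ) : ∀ r : ℕ, G s → G (s + r)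
  | 0, x => x
  | r + 1, x => sigmaMap G δ (s + r) (sigmaIter s r x)

/-- The `r`-fold iterate of the zeroth face `d_0 : G (m+r) → G m`,
i.e. `p_{m+1} ∘ p_{m+2} ∘ ⋯ ∘ p_{m+r}` on Cohen groups. -/
def dIter (m : ℕ) : ∀ r : ℕ, G (m + r) → G m
  | 0, x => x
  | r + 1, x => dIter m r (d (m + r) 0 x)

end

/-! Write `H_{k,n}` as a sum over strictly increasing tuples of coface indices and split the
tuples according to whether they start with `0`. The relation `d_0 d^{i+1} = d^i d_0` moves `d_0`
past every coface of positive index, lowering it by one. On a tuple starting with `0` it then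
meets `d^0` and cancels (`d_0 d^0 = id`), leaving a term of `H_{k,n-1}(x)`; on any other tuple it
reaches `x` itself, leaving a term of `H_{k-1,n-1}(d_0 x)`. -/

open Finset

-- Valued in `ℕ` rather than `Fin (n + 1)`, so that reindexing between levels needs no casts.
open Classical in
noncomputable def strictMonoTuples (n r : ℕ) : Finset (Fin r → ℕ) :=
  (univ.filter fun c : Fin r → Fin (n + 1) => StrictMono c).map
    ⟨fun c i => c i, fun _ _ h => funext fun i => Fin.ext (congrFun h i)⟩

theorem mem_strictMonoTuples {n r : ℕ} {c : Fin r → ℕ} :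
    c ∈ strictMonoTuples n r ↔ StrictMono c ∧ ∀ i, c i ≤ n := by
  simp only [strictMonoTuples, mem_map, mem_filter, mem_univ, true_and]
  constructor
  · rintro ⟨c, hc, rfl⟩
    exact ⟨Fin.val_strictMono.comp hc, fun i => Nat.lt_succ_iff.mp (c i).isLt⟩
  · rintro ⟨hc, hn⟩
    exact ⟨fun i => ⟨c i, Nat.lt_succ_of_le (hn i)⟩, fun _ _ hij => hc hij, rfl⟩

theorem strictMonoTuples_zero (n : ℕ) : strictMonoTuples n 0 = {Fin.elim0} :=
  eq_singleton_iff_unique_mem.mpr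
    ⟨mem_strictMonoTuples.mpr ⟨fun i => i.elim0, fun i => i.elim0⟩,
      fun _ _ => Subsingleton.elim _ _⟩

theorem mem_strictMonoTuples_init {n r : ℕ} {c : Fin (r + 1) → ℕ}
    (hc : c ∈ strictMonoTuples (n + 1) (r + 1)) :
    (fun i => c i.castSucc) ∈ strictMonoTuples n r := by
  obtain ⟨hmono, hle⟩ := mem_strictMonoTuples.mp hc
  refine mem_strictMonoTuples.mpr ⟨hmono.comp Fin.strictMono_castSucc, fun i => ?_⟩
  have := hmono (Fin.castSucc_lt_last i)
  have := hle (Fin.last r)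
  omega

section Reindex

variable {M : Type*} [AddCommMonoid M] {n r : ℕ}

theorem sum_filter_strictMonoTuples_zero (f : (Fin (r + 1) → ℕ) → M) :
    ∑ c ∈ (strictMonoTuples (n + 1) (r + 1)).filter (fun c => c 0 = 0), f c =
      ∑ c ∈ strictMonoTuples n r, f (Fin.cons 0 fun i => c i + 1) := by
  symm
  refine sum_nbij' (fun c => Fin.cons 0 fun i => c i + 1) (fun c i => c i.succ - 1)
    (fun c hc => ?_) (fun c hc => ?_) (fun c _ => ?_) (fun c hc => ?_) (fun _ _ => rfl)
  · obtain ⟨hmono, hle⟩ := mem_strictMonoTuples.mp hc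
    refine mem_filter.mpr ⟨mem_strictMonoTuples.mpr ⟨?_, fun i => ?_⟩, rfl⟩
    · exact Fin.strictMono_cons.mpr ⟨fun _ => Nat.succ_pos _, fun _ _ hij => by
        simpa using hmono hij⟩
    · refine Fin.cases (Nat.zero_le _) (fun j => ?_) i
      simpa using hle j
  · obtain ⟨hc, hc0⟩ := mem_filter.mp hc
    obtain ⟨hmono, hle⟩ := mem_strictMonoTuples.mp hc
    refine mem_strictMonoTuples.mpr ⟨fun i j hij => ?_, fun i => ?_⟩
    · have := hmono (Fin.succ_lt_succ_iff.mpr hij)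
      have := hmono (Fin.succ_pos i)
      show c i.succ - 1 < c j.succ - 1
      omega
    · have := hle i.succ
      show c i.succ - 1 ≤ n
      omega
  · funext i
    simp
  · obtain ⟨hc, hc0⟩ := mem_filter.mp hc
    funext i
    refine Fin.cases hc0.symm (fun j => ?_) i
    have := (mem_strictMonoTuples.mp hc).1 (Fin.succ_pos j)
    simp only [Fin.cons_succ]
    omega

theorem sum_filter_strictMonoTuples_ne_zero (f : (Fin (r + 1) → ℕ) → M) :
    ∑ c ∈ (strictMonoTuples (n + 1) (r + 1)).filter (fun c => ¬c 0 = 0), f c =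
      ∑ c ∈ strictMonoTuples n (r + 1), f fun i => c i + 1 := by
  symm
  refine sum_nbij' (fun c i => c i + 1) (fun c i => c i - 1)
    (fun c hc => ?_) (fun c hc => ?_) (fun c _ => ?_) (fun c hc => ?_) (fun _ _ => rfl)
  · obtain ⟨hmono, hle⟩ := mem_strictMonoTuples.mp hc
    refine mem_filter.mpr ⟨mem_strictMonoTuples.mpr ⟨fun i j hij => ?_, fun i => ?_⟩, ?_⟩
    · simpa using hmono hij
    · simpa using hle i
    · simp
  · obtain ⟨hc, hc0⟩ := mem_filter.mp hc
    obtain ⟨hmono, hle⟩ := mem_strictMonoTuples.mp hc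
    refine mem_strictMonoTuples.mpr ⟨fun i j hij => ?_, fun i => ?_⟩
    · have := hmono hij
      have := hmono.monotone (Fin.zero_le i)
      show c i - 1 < c j - 1
      omega
    · have := hle i
      show c i - 1 ≤ n
      omega
  · funext i
    simp
  · obtain ⟨hc, hc0⟩ := mem_filter.mp hc
    funext i
    have := (mem_strictMonoTuples.mp hc).1.monotone (Fin.zero_le i)
    show c i - 1 + 1 = c i
    omega

theorem sum_strictMonoTuples_succ (f : (Fin (r + 1) → ℕ) → M) :
    ∑ c ∈ strictMonoTuples (n + 1) (r + 1), f c =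
      ∑ c ∈ strictMonoTuples n r, f (Fin.cons 0 fun i => c i + 1) +
        ∑ c ∈ strictMonoTuples n (r + 1), f fun i => c i + 1 := by
  rw [← sum_filter_add_sum_filter_not _ (fun c => c 0 = 0),
    sum_filter_strictMonoTuples_zero, sum_filter_strictMonoTuples_ne_zero]

end Reindex

section BiDelta

variable {G : ℕ → Type u} [∀ n, AddCommGroup (G n)]
variable {d : ∀ n : ℕ, ℕ → (G (n + 1) →+ G n)}
variable {δ : ∀ n : ℕ, ℕ → (G n →+ G (n + 1))}

theorem cast_sum {ι : Type*} {m n : ℕ} (e : m = n) (s : Finset ι) (f : ι → G m) :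
    cast (congrArg G e) (∑ i ∈ s, f i) = ∑ i ∈ s, cast (congrArg G e) (f i) := by
  subst e
  rfl

theorem cast_coface {m n : ℕ} (e : m = n) (i : ℕ) (x : G m) :
    cast (congrArg G (congrArg (· + 1) e)) (δ m i x) = δ n i (cast (congrArg G e) x) := by
  subst e
  rfl

theorem iterCoface_succ (k r : ℕ) (c : Fin (r + 1) → ℕ) (x : G k) :
    iterCoface G δ k (r + 1) c x =
      δ (k + r) (c (Fin.last r)) (iterCoface G δ k r (fun i => c i.castSucc) x) :=
  rfl

theorem jamesHopf_eq_sum (k r : ℕ) (x : G k) :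
    jamesHopf G δ k r x = ∑ c ∈ strictMonoTuples (k + r) r, iterCoface G δ k r c x := by
  rw [jamesHopf, strictMonoTuples, sum_map]
  rfl

theorem jamesHopf_zero (k : ℕ) (x : G k) : jamesHopf G δ k 0 x = x := by
  rw [jamesHopf_eq_sum, strictMonoTuples_zero, sum_singleton]
  rfl

namespace IsBiDelta

variable (h : IsBiDelta G d δ)
include h

theorem face_zero_iterCoface_cons_zero {k r : ℕ} {c : Fin r → ℕ}
    (hc : c ∈ strictMonoTuples (k + 1 + r) r) (x : G (k + 1)) :
    d (k + 1 + r) 0 (iterCoface G δ (k + 1) (r + 1) (Fin.cons 0 fun i => c i + 1) x) =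
      iterCoface G δ (k + 1) r c x := by
  induction r with
  | zero => exact h.face_coface_eq (k + 1) 0 (Nat.zero_le _) x
  | succ r ih =>
    have hlast := (mem_strictMonoTuples.mp hc).2 (Fin.last r)
    have hinit : (fun i => (Fin.cons 0 (fun j => c j + 1) : Fin (r + 2) → ℕ) i.castSucc) =
        Fin.cons 0 fun j => c j.castSucc + 1 := by
      funext i
      exact Fin.cases rfl (fun _ => rfl) i
    calc d (k + 1 + (r + 1)) 0
          (iterCoface G δ (k + 1) (r + 2) (Fin.cons 0 fun i => c i + 1) x)
        = d (k + 1 + r + 1) 0 (δ (k + 1 + r + 1) (c (Fin.last r) + 1)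
            (iterCoface G δ (k + 1) (r + 1) (Fin.cons 0 fun j => c j.castSucc + 1) x)) := by
          rw [iterCoface_succ (k + 1) (r + 1), hinit]
          rfl
      _ = δ (k + 1 + r) (c (Fin.last r))
            (iterCoface G δ (k + 1) r (fun j => c j.castSucc) x) := by
          rw [h.face_coface_lt _ _ 0 (Nat.zero_le _) (by omega), ih (mem_strictMonoTuples_init hc)]

theorem face_zero_iterCoface_succ {k r : ℕ} {c : Fin (r + 1) → ℕ}
    (hc : c ∈ strictMonoTuples (k + (r + 1)) (r + 1)) (x : G (k + 1)) :
    d (k + 1 + r) 0 (iterCoface G δ (k + 1) (r + 1) (fun i => c i + 1) x) =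
      cast (congrArg G ((Nat.succ_add k r).symm : k + (r + 1) = k + 1 + r))
        (iterCoface G δ k (r + 1) c (d k 0 x)) := by
  induction r with
  | zero =>
    have hc0 := (mem_strictMonoTuples.mp hc).2 0
    exact (h.face_coface_lt k (c 0) 0 (Nat.zero_le _) (by omega) x).trans (cast_eq _ _).symm
  | succ r ih =>
    have hlast := (mem_strictMonoTuples.mp hc).2 (Fin.last (r + 1))
    calc d (k + 1 + (r + 1)) 0 (iterCoface G δ (k + 1) (r + 2) (fun i => c i + 1) x)
        = d (k + 1 + r + 1) 0 (δ (k + 1 + r + 1) (c (Fin.last (r + 1)) + 1)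
            (iterCoface G δ (k + 1) (r + 1) (fun i => c i.castSucc + 1) x)) := rfl
      _ = δ (k + 1 + r) (c (Fin.last (r + 1)))
            (cast (congrArg G ((Nat.succ_add k r).symm : k + (r + 1) = k + 1 + r))
              (iterCoface G δ k (r + 1) (fun i => c i.castSucc) (d k 0 x))) := by
          rw [h.face_coface_lt _ _ 0 (Nat.zero_le _) (by omega), ih (mem_strictMonoTuples_init hc)]
      _ = cast (congrArg G ((Nat.succ_add k (r + 1)).symm : k + (r + 2) = k + 1 + (r + 1)))
            (iterCoface G δ k (r + 2) c (d k 0 x)) :=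
          (cast_coface (Nat.succ_add k r).symm _ _).symm

theorem face_zero_jamesHopf_succ (k r : ℕ) (x : G (k + 1)) :
    d (k + 1 + r) 0 (jamesHopf G δ (k + 1) (r + 1) x) =
      jamesHopf G δ (k + 1) r x +
        cast (congrArg G ((Nat.succ_add k r).symm : k + (r + 1) = k + 1 + r))
          (jamesHopf G δ k (r + 1) (d k 0 x)) := by
  simp only [jamesHopf_eq_sum, map_sum]
  rw [cast_sum (Nat.succ_add k r).symm]
  refine (sum_strictMonoTuples_succ (n := k + 1 + r) _).trans
    (congrArg₂ (· + ·) (sum_congr rfl fun c hc => ?_) (sum_congr ?_ fun c hc => ?_))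
  · exact h.face_zero_iterCoface_cons_zero hc x
  · exact congrArg (strictMonoTuples · (r + 1)) (by omega)
  · exact h.face_zero_iterCoface_succ hc x

end IsBiDelta

end BiDelta

/-- first James–Hopf identity. For an abelian bi-Δ-group `G`,
`1 ≤ k ≤ n` and `x ∈ 𝔥_k G`, one has
`p_n(H_{k,n}(x)) = H_{k,n-1}(x) + H_{k-1,n-1}(p_k(x))`, i.e.
`d_0(H_{k,n}(x)) = H_{k,n-1}(x) + H_{k-1,n-1}(d_0 x)`, with the convention
`H_{k,n-1} = 0` when `k > n-1`. Here `k = a+1`; the first clause is the case `n = k`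
(where `H_{k,n-1} = 0`), the second clause is the case `n = k + s + 1`. -/
theorem stmt7 (G : ℕ → Type u) [∀ n, AddCommGroup (G n)]
    (d : ∀ n : ℕ, ℕ → (G (n + 1) →+ G n)) (δ : ∀ n : ℕ, ℕ → (G n →+ G (n + 1)))
    (h : IsBiDelta G d δ) (a : ℕ) :
    (∀ x ∈ cohenAll G d (a + 1),
      d a 0 (jamesHopf G δ (a + 1) 0 x) = jamesHopf G δ a 0 (d a 0 x)) ∧
    ∀ s : ℕ, ∀ x ∈ cohenAll G d (a + 1),
      d (a + 1 + s) 0 (jamesHopf G δ (a + 1) (s + 1) x)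
        = jamesHopf G δ (a + 1) s x
          + cast (congrArg G (by omega : a + (s + 1) = a + 1 + s))
              (jamesHopf G δ a (s + 1) (d a 0 x)) :=
  ⟨fun x _ => by rw [jamesHopf_zero, jamesHopf_zero],
    fun s x _ => h.face_zero_jamesHopf_succ a s x⟩
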